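/- Under the hypotheses of the AC setting — L_c, L_s, L_c', L_s' real symmetric positive semidefinite n×n matrices with the sandwich inequalities (1/(1+ε))·zᵀL_c z ≤ zᵀL_c' z ≤ (1+ε)·zᵀL_c z and (1/(1+ε))·zᵀL_s z ≤ zᵀL_s' z ≤ (1+ε)·zᵀL_s z for all z ∈ ℝⁿ, ε ≥ 0, ℰ, ℱ real diagonal mn×mn matrices, V = ℰ + iℱ, 𝓛 = block-diagonal of m copies of L_c − iL_s, 𝓛' = block-diagonal of m copies of L_c' − iL_s', 𝓛_c, 𝓛_s block-diagonal of m copies of L_c, L_s, and 𝟙 ∈ ℝ^{mn} the all-ones vector — the following bound holds: ‖V·(conj(𝓛') − conj(𝓛))·conj(V)·𝟙‖² ≤ ε²·( ‖ℰ𝓛_cℰ‖·‖𝟙‖ + ‖ℱ𝓛_cℱ‖·‖𝟙‖ + ‖ℰ‖·‖𝓛_s‖·‖ℱ𝟙‖ + ‖ℱ‖·‖𝓛_s‖·‖ℰ𝟙‖ )² + ε²·( ‖ℰ𝓛_sℰ‖·‖𝟙‖ + ‖ℱ𝓛_sℱ‖·‖𝟙‖ + ‖ℱ‖·‖𝓛_c‖·‖ℰ𝟙‖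 + ‖ℰ‖·‖𝓛_c‖·‖ℱ𝟙‖ )², where conj denotes entrywise complex conjugation, ‖𝟙‖ = √(mn), and ‖·‖ is the Euclidean vector norm / operator 2-norm. -/

import Mathlib

open Matrix
open scoped Matrix.Norms.L2Operator

/-- The Euclidean norm of a real vector. -/
noncomputable def vnorm {ι : Type*} [Fintype ι] (v : ι → ℝ) : ℝ :=
  Real.sqrt (∑ i, v i ^ 2)

/-- The Euclidean norm of a complex vector. -/
noncomputable def cvnorm {ι : Type*} [Fintype ι] (v : ι → ℂ) : ℝ :=
  Real.sqrt (∑ i, ‖v i‖ ^ 2)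

/-!
Write `V = ℰ + iℱ`, `A = 𝓛c' - 𝓛c`, `B = 𝓛s' - 𝓛s`, so that `conj 𝓛' - conj 𝓛 = A + iB`.
Expanding, `V (A + iB) conj V 𝟙` has real part `(ℰAℰ + ℱAℱ + ℰBℱ - ℱBℰ) 𝟙` and imaginary part
`(ℰBℰ + ℱBℱ + ℱAℰ - ℰAℱ) 𝟙`, and the squared norm is the sum of their squared norms. Each is
bounded by the triangle inequality and submultiplicativity. The sandwich inequalities survive
block-diagonal assembly and congruence `M ↦ SᵀMS`, and for a positive semidefinite `M` they give
`|zᵀ(M' - M)z| ≤ ε zᵀMz ≤ ε ‖M‖ ‖z‖²`; for the symmetric matrix `M' - M` this bounds the operator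
norm, since that is the supremum of its Rayleigh quotient. Hence `‖ℰAℰ‖ ≤ ε ‖ℰ𝓛cℰ‖`,
`‖A‖ ≤ ε ‖𝓛c‖`, and likewise for the other terms.
-/

lemma EuclideanSpace.norm_toLp_sq {ι : Type*} [Fintype ι] (z : ι → ℝ) :
    ‖WithLp.toLp 2 z‖ ^ 2 = z ⬝ᵥ z := by
  rw [← real_inner_self_eq_norm_sq, EuclideanSpace.inner_toLp_toLp, star_trivial]

namespace Matrix

variable {ι κ : Type*} [Fintype ι] [Fintype κ]

lemma inner_toEuclideanCLM_self [DecidableEq ι] (M : Matrix ι ι ℝ) (z : ι → ℝ) :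
    inner ℝ (toEuclideanCLM (𝕜 := ℝ) M (WithLp.toLp 2 z)) (WithLp.toLp 2 z) = z ⬝ᵥ M *ᵥ z := by
  simp [EuclideanSpace.inner_eq_star_dotProduct]

lemma dotProduct_mulVec_self_le_l2_opNorm [DecidableEq ι] (M : Matrix ι ι ℝ) (z : ι → ℝ) :
    z ⬝ᵥ M *ᵥ z ≤ ‖M‖ * (z ⬝ᵥ z) := by
  set x := WithLp.toLp 2 z
  calc z ⬝ᵥ M *ᵥ z = inner ℝ (toEuclideanCLM (𝕜 := ℝ) M x) x :=
        (inner_toEuclideanCLM_self M z).symm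
    _ ≤ ‖toEuclideanCLM (𝕜 := ℝ) M x‖ * ‖x‖ := real_inner_le_norm _ _
    _ ≤ ‖M‖ * ‖x‖ * ‖x‖ := by gcongr; exact (toEuclideanCLM (𝕜 := ℝ) M).le_opNorm x
    _ = ‖M‖ * (z ⬝ᵥ z) := by rw [mul_assoc, ← sq, EuclideanSpace.norm_toLp_sq]

lemma l2_opNorm_le_of_abs_dotProduct_mulVec_le [DecidableEq ι] {M : Matrix ι ι ℝ}
    (hM : M.IsHermitian) {C : ℝ} (hC : 0 ≤ C) (h : ∀ z, |z ⬝ᵥ M *ᵥ z| ≤ C * (z ⬝ᵥ z)) :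
    ‖M‖ ≤ C := by
  change ‖toEuclideanCLM (𝕜 := ℝ) M‖ ≤ C
  rw [ContinuousLinearMap.norm_eq_iSup_rayleighQuotient]
  · refine ciSup_le fun x => ?_
    rw [← WithLp.toLp_ofLp 2 x, ContinuousLinearMap.rayleighQuotient,
      ContinuousLinearMap.reApplyInnerSelf_apply, RCLike.re_to_real, inner_toEuclideanCLM_self,
      abs_div, abs_sq]
    refine div_le_of_le_mul₀ (sq_nonneg _) hC ?_
    rw [EuclideanSpace.norm_toLp_sq]
    exact h x.ofLp
  · exact isSymmetric_toEuclideanLin_iff.mpr hM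

lemma blockDiagonal_mulVec_apply {m α : Type*} [Fintype m] [DecidableEq m]
    [NonUnitalNonAssocSemiring α] (M : m → Matrix ι ι α) (z : ι × m → α) (i : ι) (k : m) :
    (blockDiagonal M *ᵥ z) (i, k) = (M k *ᵥ fun j => z (j, k)) i := by
  simp [mulVec, dotProduct, blockDiagonal_apply, Fintype.sum_prod_type]

lemma dotProduct_blockDiagonal_mulVec {m α : Type*} [Fintype m] [DecidableEq m]
    [NonUnitalNonAssocSemiring α] (M : m → Matrix ι ι α) (x y : ι × m → α) :
    x ⬝ᵥ blockDiagonal M *ᵥ y = ∑ k, (fun i => x (i, k)) ⬝ᵥ M k *ᵥ fun i => y (i, k) := by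
  simp only [dotProduct, blockDiagonal_mulVec_apply, Fintype.sum_prod_type]
  exact Finset.sum_comm

lemma PosSemidef.blockDiagonal {m R : Type*} [Fintype m] [DecidableEq m] [Ring R]
    [PartialOrder R] [StarRing R] [IsOrderedAddMonoid R] {M : m → Matrix ι ι R}
    (h : ∀ k, (M k).PosSemidef) : (blockDiagonal M).PosSemidef :=
  .of_dotProduct_mulVec_nonneg (isHermitian_blockDiagonal_iff.mpr fun k => (h k).1) fun z => by
    rw [dotProduct_blockDiagonal_mulVec]
    exact Finset.sum_nonneg fun k _ => (h k).dotProduct_mulVec_nonneg _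

def IsSpectralApprox (ε : ℝ) (M M' : Matrix ι ι ℝ) : Prop :=
  ∀ z : ι → ℝ, 1 / (1 + ε) * (z ⬝ᵥ M *ᵥ z) ≤ z ⬝ᵥ M' *ᵥ z ∧
    z ⬝ᵥ M' *ᵥ z ≤ (1 + ε) * (z ⬝ᵥ M *ᵥ z)

namespace IsSpectralApprox

variable {ε : ℝ} {M M' : Matrix ι ι ℝ}

lemma transpose_mul_mul (h : IsSpectralApprox ε M M') (S : Matrix ι κ ℝ) :
    IsSpectralApprox ε (Sᵀ * M * S) (Sᵀ * M' * S) := by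
  intro z
  simpa only [← mulVec_mulVec, dotProduct_mulVec z Sᵀ, vecMul_transpose] using h (S *ᵥ z)

lemma blockDiagonal {m : Type*} [Fintype m] [DecidableEq m] {M M' : m → Matrix ι ι ℝ}
    (h : ∀ k, IsSpectralApprox ε (M k) (M' k)) :
    IsSpectralApprox ε (Matrix.blockDiagonal M) (Matrix.blockDiagonal M') := by
  intro z
  simp only [dotProduct_blockDiagonal_mulVec, Finset.mul_sum]
  exact ⟨Finset.sum_le_sum fun k _ => (h k _).1, Finset.sum_le_sum fun k _ => (h k _).2⟩

lemma abs_sub_le (h : IsSpectralApprox ε M M') (hε : 0 ≤ ε) (hM : M.PosSemidef) (z : ι → ℝ) :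
    |z ⬝ᵥ M' *ᵥ z - z ⬝ᵥ M *ᵥ z| ≤ ε * (z ⬝ᵥ M *ᵥ z) := by
  obtain ⟨hlow, hup⟩ := h z
  have hq : 0 ≤ z ⬝ᵥ M *ᵥ z := by simpa using hM.dotProduct_mulVec_nonneg z
  rw [div_mul_eq_mul_div, one_mul, div_le_iff₀ (by linarith)] at hlow
  rw [abs_sub_le_iff]
  constructor <;> nlinarith

lemma norm_sub_le [DecidableEq ι] (h : IsSpectralApprox ε M M') (hε : 0 ≤ ε)
    (hM : M.PosSemidef) (hM' : M'.IsHermitian) : ‖M' - M‖ ≤ ε * ‖M‖ := by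
  refine l2_opNorm_le_of_abs_dotProduct_mulVec_le (hM'.sub hM.1) (by positivity) fun z => ?_
  rw [sub_mulVec, dotProduct_sub, mul_assoc]
  exact (h.abs_sub_le hε hM z).trans
    (mul_le_mul_of_nonneg_left (dotProduct_mulVec_self_le_l2_opNorm M z) hε)

lemma norm_transpose_mul_sub_mul_le [DecidableEq κ] (h : IsSpectralApprox ε M M') (hε : 0 ≤ ε)
    (hM : M.PosSemidef) (hM' : M'.IsHermitian) (S : Matrix ι κ ℝ) :
    ‖Sᵀ * (M' - M) * S‖ ≤ ε * ‖Sᵀ * M * S‖ := by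
  rw [Matrix.mul_sub, Matrix.sub_mul]
  refine (h.transpose_mul_mul S).norm_sub_le hε ?_ ?_
  · simpa [conjTranspose_eq_transpose_of_trivial] using hM.conjTranspose_mul_mul_same S
  · simpa [conjTranspose_eq_transpose_of_trivial] using isHermitian_conjTranspose_mul_mul S hM'

end IsSpectralApprox

section ReIm

open Complex

variable {l m n : Type*}

def ofReIm (X Y : Matrix m n ℝ) : Matrix m n ℂ := X.map (↑) + I • Y.map (↑)

@[simp] lemma ofReIm_apply (X Y : Matrix m n ℝ) (i : m) (j : n) :
    ofReIm X Y i j = ⟨X i j, Y i j⟩ := by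
  apply Complex.ext <;> simp [ofReIm]

lemma ofReIm_neg_right (X Y : Matrix m n ℝ) : ofReIm X (-Y) = X.map (↑) - I • Y.map (↑) := by
  simp [ofReIm, sub_eq_add_neg, Matrix.map_neg]

lemma map_conj_ofReIm (X Y : Matrix m n ℝ) :
    (ofReIm X Y).map (starRingEnd ℂ) = ofReIm X (-Y) := by
  ext i j; simp [Complex.ext_iff]

lemma ofReIm_sub (X Y X' Y' : Matrix m n ℝ) :
    ofReIm X Y - ofReIm X' Y' = ofReIm (X - X') (Y - Y') := by
  ext i j; simp [Complex.ext_iff]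

lemma ofReIm_mul [Fintype m] (X Y : Matrix l m ℝ) (Z W : Matrix m n ℝ) :
    ofReIm X Y * ofReIm Z W = ofReIm (X * Z - Y * W) (X * W + Y * Z) := by
  ext i j; simp [mul_apply, Complex.ext_iff, Finset.sum_add_distrib, Finset.sum_sub_distrib]

lemma ofReIm_mulVec [Fintype n] (X Y : Matrix m n ℝ) (v : n → ℝ) :
    ofReIm X Y *ᵥ (fun j => (v j : ℂ)) = fun i => ((X *ᵥ v) i : ℂ) + I * (Y *ᵥ v) i := by
  ext i; simp [mulVec, dotProduct, Complex.ext_iff]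

end ReIm

end Matrix

section EuclideanNorm

variable {m n : Type*} [Fintype m] [Fintype n]

lemma vnorm_eq_norm_toLp (v : n → ℝ) : vnorm v = ‖WithLp.toLp 2 v‖ := by
  simp [vnorm, EuclideanSpace.norm_eq]

lemma vnorm_nonneg (v : n → ℝ) : 0 ≤ vnorm v := Real.sqrt_nonneg _

lemma vnorm_add_le (v w : n → ℝ) : vnorm (v + w) ≤ vnorm v + vnorm w := by
  simpa only [vnorm_eq_norm_toLp, WithLp.toLp_add] using norm_add_le (WithLp.toLp 2 v) _

lemma vnorm_sub_le (v w : n → ℝ) : vnorm (v - w) ≤ vnorm v + vnorm w := by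
  simpa only [vnorm_eq_norm_toLp, WithLp.toLp_sub] using norm_sub_le (WithLp.toLp 2 v) _

lemma vnorm_mulVec_le [DecidableEq n] (A : Matrix m n ℝ) (v : n → ℝ) :
    vnorm (A *ᵥ v) ≤ ‖A‖ * vnorm v := by
  rw [vnorm_eq_norm_toLp, vnorm_eq_norm_toLp]
  exact A.l2_opNorm_mulVec (WithLp.toLp 2 v)

lemma cvnorm_ofReal_add_I_mul_sq (x y : n → ℝ) :
    cvnorm (fun i => (x i : ℂ) + Complex.I * y i) ^ 2 = vnorm x ^ 2 + vnorm y ^ 2 := by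
  simp only [cvnorm, vnorm, mul_comm Complex.I, Complex.sq_norm, Complex.normSq_add_mul_I]
  rw [Real.sq_sqrt (by positivity), Real.sq_sqrt (by positivity), Real.sq_sqrt (by positivity),
    Finset.sum_add_distrib]

lemma vnorm_mulVec_add_add_sub_le [DecidableEq n] {ε a₁ a₂ b : ℝ} {X₁ X₂ B : Matrix n n ℝ}
    (hX₁ : ‖X₁‖ ≤ ε * a₁) (hX₂ : ‖X₂‖ ≤ ε * a₂) (hB : ‖B‖ ≤ ε * b) (R T : Matrix n n ℝ)
    (v : n → ℝ) :
    vnorm ((X₁ + X₂ + R * B * T - T * B * R) *ᵥ v) ≤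
      ε * (a₁ * vnorm v + a₂ * vnorm v + ‖R‖ * b * vnorm (T *ᵥ v) + ‖T‖ * b * vnorm (R *ᵥ v)) := by
  have triple (R T : Matrix n n ℝ) : vnorm ((R * B * T) *ᵥ v) ≤ ‖R‖ * ‖B‖ * vnorm (T *ᵥ v) := by
    rw [← mulVec_mulVec, ← mulVec_mulVec, mul_assoc]
    exact (vnorm_mulVec_le _ _).trans (by gcongr; exact vnorm_mulVec_le _ _)
  have := vnorm_nonneg v
  have := vnorm_nonneg (R *ᵥ v)
  have := vnorm_nonneg (T *ᵥ v)
  calc _ ≤ vnorm (X₁ *ᵥ v) + vnorm (X₂ *ᵥ v) + vnorm ((R * B * T) *ᵥ v)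
        + vnorm ((T * B * R) *ᵥ v) := by
        simp only [add_mulVec, sub_mulVec]
        grw [vnorm_sub_le, vnorm_add_le, vnorm_add_le]
    _ ≤ ‖X₁‖ * vnorm v + ‖X₂‖ * vnorm v + ‖R‖ * ‖B‖ * vnorm (T *ᵥ v)
        + ‖T‖ * ‖B‖ * vnorm (R *ᵥ v) := by
        gcongr
        exacts [vnorm_mulVec_le _ _, vnorm_mulVec_le _ _, triple _ _, triple _ _]
    _ ≤ ε * a₁ * vnorm v + ε * a₂ * vnorm v + ‖R‖ * (ε * b) * vnorm (T *ᵥ v)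
        + ‖T‖ * (ε * b) * vnorm (R *ᵥ v) := by gcongr
    _ = _ := by ring

end EuclideanNorm

theorem ac_intermediate_bound_general
    (n m : ℕ) (ε : ℝ) (hε : 0 ≤ ε)
    (Lc Ls Lc' Ls' : Matrix (Fin n) (Fin n) ℝ)
    (hLc : Lc.PosSemidef) (hLs : Ls.PosSemidef) (hLc' : Lc'.PosSemidef) (hLs' : Ls'.PosSemidef)
    (hsandc : ∀ z : Fin n → ℝ,
      (1 / (1 + ε)) * (z ⬝ᵥ Lc.mulVec z) ≤ z ⬝ᵥ Lc'.mulVec z ∧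
      z ⬝ᵥ Lc'.mulVec z ≤ (1 + ε) * (z ⬝ᵥ Lc.mulVec z))
    (hsands : ∀ z : Fin n → ℝ,
      (1 / (1 + ε)) * (z ⬝ᵥ Ls.mulVec z) ≤ z ⬝ᵥ Ls'.mulVec z ∧
      z ⬝ᵥ Ls'.mulVec z ≤ (1 + ε) * (z ⬝ᵥ Ls.mulVec z))
    (E F : Fin n × Fin m → ℝ)
    (Emat Fmat : Matrix (Fin n × Fin m) (Fin n × Fin m) ℝ)
    (hE : Emat = diagonal E) (hF : Fmat = diagonal F)
    (V : Matrix (Fin n × Fin m) (Fin n × Fin m) ℂ)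
    (hV : V = Emat.map Complex.ofReal + Complex.I • Fmat.map Complex.ofReal)
    (𝓛c 𝓛s 𝓛c' 𝓛s' : Matrix (Fin n × Fin m) (Fin n × Fin m) ℝ)
    (h𝓛c : 𝓛c = blockDiagonal (fun _ => Lc)) (h𝓛s : 𝓛s = blockDiagonal (fun _ => Ls))
    (h𝓛c' : 𝓛c' = blockDiagonal (fun _ => Lc')) (h𝓛s' : 𝓛s' = blockDiagonal (fun _ => Ls'))
    (𝓛 𝓛' : Matrix (Fin n × Fin m) (Fin n × Fin m) ℂ)
    (h𝓛 : 𝓛 = 𝓛c.map Complex.ofReal - Complex.I • 𝓛s.map Complex.ofReal)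
    (h𝓛' : 𝓛' = 𝓛c'.map Complex.ofReal - Complex.I • 𝓛s'.map Complex.ofReal) :
    cvnorm ((V * (𝓛'.map (starRingEnd ℂ) - 𝓛.map (starRingEnd ℂ)) *
        V.map (starRingEnd ℂ)).mulVec (fun _ => 1)) ^ 2 ≤
      ε ^ 2 * (‖Emat * 𝓛c * Emat‖ * vnorm (fun _ : Fin n × Fin m => (1 : ℝ)) +
               ‖Fmat * 𝓛c * Fmat‖ * vnorm (fun _ : Fin n × Fin m => (1 : ℝ)) +
               ‖Emat‖ * ‖𝓛s‖ * vnorm (Fmat.mulVec (fun _ => 1)) +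
               ‖Fmat‖ * ‖𝓛s‖ * vnorm (Emat.mulVec (fun _ => 1))) ^ 2 +
      ε ^ 2 * (‖Emat * 𝓛s * Emat‖ * vnorm (fun _ : Fin n × Fin m => (1 : ℝ)) +
               ‖Fmat * 𝓛s * Fmat‖ * vnorm (fun _ : Fin n × Fin m => (1 : ℝ)) +
               ‖Fmat‖ * ‖𝓛c‖ * vnorm (Emat.mulVec (fun _ => 1)) +
               ‖Emat‖ * ‖𝓛c‖ * vnorm (Fmat.mulVec (fun _ => 1))) ^ 2 := by
  have hEt : Ematᵀ = Emat := hE ▸ diagonal_transpose E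
  have hFt : Fmatᵀ = Fmat := hF ▸ diagonal_transpose F
  have hc : IsSpectralApprox ε 𝓛c 𝓛c' := h𝓛c ▸ h𝓛c' ▸ .blockDiagonal fun _ => hsandc
  have hs : IsSpectralApprox ε 𝓛s 𝓛s' := h𝓛s ▸ h𝓛s' ▸ .blockDiagonal fun _ => hsands
  have hc_psd : 𝓛c.PosSemidef := h𝓛c ▸ .blockDiagonal fun _ => hLc
  have hs_psd : 𝓛s.PosSemidef := h𝓛s ▸ .blockDiagonal fun _ => hLs
  have hc' : 𝓛c'.IsHermitian := h𝓛c' ▸ isHermitian_blockDiagonal_iff.mpr fun _ => hLc'.1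
  have hs' : 𝓛s'.IsHermitian := h𝓛s' ▸ isHermitian_blockDiagonal_iff.mpr fun _ => hLs'.1
  have hprod : V * (𝓛'.map (starRingEnd ℂ) - 𝓛.map (starRingEnd ℂ)) * V.map (starRingEnd ℂ) =
      ofReIm
        (Emat * (𝓛c' - 𝓛c) * Emat + Fmat * (𝓛c' - 𝓛c) * Fmat
          + Emat * (𝓛s' - 𝓛s) * Fmat - Fmat * (𝓛s' - 𝓛s) * Emat)
        (Emat * (𝓛s' - 𝓛s) * Emat + Fmat * (𝓛s' - 𝓛s) * Fmat
          + Fmat * (𝓛c' - 𝓛c) * Emat - Emat * (𝓛c' - 𝓛c) * Fmat) := by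
    rw [show V = ofReIm Emat Fmat from hV, h𝓛, h𝓛', ← ofReIm_neg_right, ← ofReIm_neg_right,
      map_conj_ofReIm, map_conj_ofReIm, map_conj_ofReIm, neg_neg, neg_neg, ofReIm_sub,
      ofReIm_mul, ofReIm_mul]
    congr 1 <;> noncomm_ring
  rw [hprod, ← Complex.ofReal_one, ofReIm_mulVec, cvnorm_ofReal_add_I_mul_sq, ← mul_pow, ← mul_pow]
  have hre := vnorm_mulVec_add_add_sub_le
    (hEt ▸ hc.norm_transpose_mul_sub_mul_le hε hc_psd hc' Emat)
    (hFt ▸ hc.norm_transpose_mul_sub_mul_le hε hc_psd hc' Fmat)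
    (hs.norm_sub_le hε hs_psd hs') Emat Fmat (fun _ => 1)
  have him := vnorm_mulVec_add_add_sub_le
    (hEt ▸ hs.norm_transpose_mul_sub_mul_le hε hs_psd hs' Emat)
    (hFt ▸ hs.norm_transpose_mul_sub_mul_le hε hs_psd hs' Fmat)
    (hc.norm_sub_le hε hc_psd hc') Fmat Emat (fun _ => 1)
  exact add_le_add (pow_le_pow_left₀ (vnorm_nonneg _) hre 2)
    (pow_le_pow_left₀ (vnorm_nonneg _) him 2)

/-- main intermediate inequality of the AC theorem:
`‖V(conj(𝓛')−conj(𝓛))conj(V)𝟙‖²` is bounded by the ε-scaled squared sums of the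
corresponding operator norms for the unprimed matrices. -/
theorem ac_intermediate_bound
    (n m : ℕ) (hn : 1 ≤ n) (hm : 1 ≤ m) (ε : ℝ) (hε : 0 ≤ ε)
    (Lc Ls Lc' Ls' : Matrix (Fin n) (Fin n) ℝ)
    (hLc : Lc.PosSemidef) (hLs : Ls.PosSemidef) (hLc' : Lc'.PosSemidef) (hLs' : Ls'.PosSemidef)
    (hsandc : ∀ z : Fin n → ℝ,
      (1 / (1 + ε)) * (z ⬝ᵥ Lc.mulVec z) ≤ z ⬝ᵥ Lc'.mulVec z ∧
      z ⬝ᵥ Lc'.mulVec z ≤ (1 + ε) * (z ⬝ᵥ Lc.mulVec z))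
    (hsands : ∀ z : Fin n → ℝ,
      (1 / (1 + ε)) * (z ⬝ᵥ Ls.mulVec z) ≤ z ⬝ᵥ Ls'.mulVec z ∧
      z ⬝ᵥ Ls'.mulVec z ≤ (1 + ε) * (z ⬝ᵥ Ls.mulVec z))
    (E F : Fin n × Fin m → ℝ)
    (Emat Fmat : Matrix (Fin n × Fin m) (Fin n × Fin m) ℝ)
    (hE : Emat = diagonal E) (hF : Fmat = diagonal F)
    (V : Matrix (Fin n × Fin m) (Fin n × Fin m) ℂ)
    (hV : V = Emat.map Complex.ofReal + Complex.I • Fmat.map Complex.ofReal)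
    (𝓛c 𝓛s 𝓛c' 𝓛s' : Matrix (Fin n × Fin m) (Fin n × Fin m) ℝ)
    (h𝓛c : 𝓛c = blockDiagonal (fun _ => Lc)) (h𝓛s : 𝓛s = blockDiagonal (fun _ => Ls))
    (h𝓛c' : 𝓛c' = blockDiagonal (fun _ => Lc')) (h𝓛s' : 𝓛s' = blockDiagonal (fun _ => Ls'))
    (𝓛 𝓛' : Matrix (Fin n × Fin m) (Fin n × Fin m) ℂ)
    (h𝓛 : 𝓛 = 𝓛c.map Complex.ofReal - Complex.I • 𝓛s.map Complex.ofReal)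
    (h𝓛' : 𝓛' = 𝓛c'.map Complex.ofReal - Complex.I • 𝓛s'.map Complex.ofReal) :
    cvnorm ((V * (𝓛'.map (starRingEnd ℂ) - 𝓛.map (starRingEnd ℂ)) *
        V.map (starRingEnd ℂ)).mulVec (fun _ => 1)) ^ 2 ≤
      ε ^ 2 * (‖Emat * 𝓛c * Emat‖ * vnorm (fun _ : Fin n × Fin m => (1 : ℝ)) +
               ‖Fmat * 𝓛c * Fmat‖ * vnorm (fun _ : Fin n × Fin m => (1 : ℝ)) +
               ‖Emat‖ * ‖𝓛s‖ * vnorm (Fmat.mulVec (fun _ => 1)) +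
               ‖Fmat‖ * ‖𝓛s‖ * vnorm (Emat.mulVec (fun _ => 1))) ^ 2 +
      ε ^ 2 * (‖Emat * 𝓛s * Emat‖ * vnorm (fun _ : Fin n × Fin m => (1 : ℝ)) +
               ‖Fmat * 𝓛s * Fmat‖ * vnorm (fun _ : Fin n × Fin m => (1 : ℝ)) +
               ‖Fmat‖ * ‖𝓛c‖ * vnorm (Emat.mulVec (fun _ => 1)) +
               ‖Emat‖ * ‖𝓛c‖ * vnorm (Fmat.mulVec (fun _ => 1))) ^ 2 :=
  ac_intermediate_bound_general n m ε hε Lc Ls Lc' Ls' hLc hLs hLc' hLs' hsandc hsands E F Emat Fmat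
    hE hF V hV 𝓛c 𝓛s 𝓛c' 𝓛s' h𝓛c h𝓛s h𝓛c' h𝓛s' 𝓛 𝓛' h𝓛 h𝓛'
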